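/- If W is a diagonal symmetric n×n matrix with entries W_{11} ≥ W_{22} ≥ ... ≥ W_{nn} lying in Γ₂, then there exists a constant c₂ > 0 depending only on n such that for every j ≥ 2, σ₂^{jj}(W) = σ₁(W) − W_{jj} ≥ c₂·σ₁(W). -/
import Mathlib


open Finset

noncomputable def s1 {n : ℕ} (x : Fin n → ℝ) : ℝ := ∑ i, x i

noncomputable def s2 {n : ℕ} (x : Fin n → ℝ) : ℝ :=
  ((∑ i, x i) ^ 2 - ∑ i, (x i) ^ 2) / 2

noncomputable def s3 {n : ℕ} (x : Fin n → ℝ) : ℝ :=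
  ((∑ i, x i) ^ 3 - 3 * (∑ i, x i) * (∑ i, (x i) ^ 2) + 2 * ∑ i, (x i) ^ 3) / 6

def Gamma2 {n : ℕ} : Set (Fin n → ℝ) := {x | 0 < s1 x ∧ 0 < s2 x}

def Gamma3 {n : ℕ} : Set (Fin n → ℝ) := {x | 0 < s1 x ∧ 0 < s2 x ∧ 0 < s3 x}

theorem stmt_1 (n : ℕ) (hn : 2 ≤ n) :
    ∃ c2 : ℝ, 0 < c2 ∧ ∀ x : Fin n → ℝ,
      (∀ i j : Fin n, i ≤ j → x j ≤ x i) → x ∈ Gamma2 →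
      ∀ j : Fin n, j ≠ ⟨0, by omega⟩ →
      c2 * s1 x ≤ s1 x - x j := by
  refine ⟨1/4, by norm_num, ?_⟩
  intro x hmono hx j hj
  obtain ⟨h1, h2⟩ := hx
  have hs1 : 0 < s1 x := h1
  have hsq : ∑ i, (x i) ^ 2 < (s1 x) ^ 2 := by
    have h2' := h2
    unfold s2 at h2'
    unfold s1
    nlinarith [h2']
  have h0n : (0 : ℕ) < n := by omega
  have h1n : (1 : ℕ) < n := by omega
  set i0 : Fin n := ⟨0, h0n⟩ with hi0
  set i1 : Fin n := ⟨1, h1n⟩ with hi1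
  have hjval : (1 : ℕ) ≤ j.val := by
    have : j.val ≠ 0 := fun h => hj (Fin.ext h)
    omega
  have hxj : x j ≤ x i1 := hmono i1 j hjval
  have h10 : x i1 ≤ x i0 := hmono i0 i1 (by simp [hi0, hi1])
  by_cases hpos : x j ≤ 0
  · nlinarith
  · push_neg at hpos
    have hsum2 : x i0 ^ 2 + x i1 ^ 2 ≤ ∑ i, (x i) ^ 2 := by
      have hsub : ({i0, i1} : Finset (Fin n)).sum (fun i => (x i) ^ 2) ≤
          ∑ i, (x i) ^ 2 :=
        Finset.sum_le_sum_of_subset_of_nonneg (Finset.subset_univ _)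
          (fun i _ _ => sq_nonneg _)
      rwa [Finset.sum_pair (by simp [hi0, hi1, Fin.ext_iff])] at hsub
    nlinarith [hxj, h10, hsum2, hsq, hpos, hs1]
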